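/- Let A be a finite nonempty set, let π₀ : A → ℝ satisfy π₀(a) > 0 for all a ∈ A and ∑_{a∈A} π₀(a) = 1, and let w > 0. Then for any two functions Q₁, Q₂ : A → ℝ, |w·log(∑_{a∈A} π₀(a)·exp(Q₁(a)/w)) − w·log(∑_{a∈A} π₀(a)·exp(Q₂(a)/w))| ≤ max_{a∈A} |Q₁(a) − Q₂(a)|, i.e., the mellowmax operator is non-expansive in the sup norm. -/

import Mathlib

/-! Mellowmax is monotone in `Q` and commutes with adding a constant, since
`exp ((Q a + c) / w)` factors as `exp (c / w) * exp (Q a / w)`. With `M` the sup distance,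
`Q₁ ≤ Q₂ + M` then gives `mmax Q₁ ≤ mmax Q₂ + M`, and symmetrically. -/

open Real Finset

noncomputable def mellowmax {A : Type*} [Fintype A] (π₀ : A → ℝ) (w : ℝ) (Q : A → ℝ) : ℝ :=
  w * log (∑ a, π₀ a * exp (Q a / w))

section

variable {A : Type*} [Fintype A] [Nonempty A] {π₀ : A → ℝ} {w : ℝ}

lemma sum_mul_exp_pos (hπ : ∀ a, 0 < π₀ a) (f : A → ℝ) : 0 < ∑ a, π₀ a * exp (f a) :=
  sum_pos (fun a _ => mul_pos (hπ a) (exp_pos _)) univ_nonempty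

lemma mellowmax_mono (hπ : ∀ a, 0 < π₀ a) (hw : 0 < w) {Q Q' : A → ℝ} (h : Q ≤ Q') :
    mellowmax π₀ w Q ≤ mellowmax π₀ w Q' := by
  have hsum : ∑ a, π₀ a * exp (Q a / w) ≤ ∑ a, π₀ a * exp (Q' a / w) :=
    sum_le_sum fun a _ => by gcongr; exacts [(hπ a).le, h a]
  exact mul_le_mul_of_nonneg_left (log_le_log (sum_mul_exp_pos hπ _) hsum) hw.le

lemma mellowmax_add_const (hπ : ∀ a, 0 < π₀ a) (hw : w ≠ 0) (Q : A → ℝ) (c : ℝ) :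
    mellowmax π₀ w (fun a => Q a + c) = mellowmax π₀ w Q + c := by
  have hsum : ∑ a, π₀ a * exp ((Q a + c) / w) = exp (c / w) * ∑ a, π₀ a * exp (Q a / w) := by
    rw [mul_sum]
    refine sum_congr rfl fun a _ => ?_
    rw [add_div, exp_add]
    ring
  rw [mellowmax, mellowmax, hsum, log_mul (exp_ne_zero _) (sum_mul_exp_pos hπ _).ne', log_exp,
    mul_add, mul_div_cancel₀ _ hw, add_comm]

lemma mellowmax_le_add_of_le_add (hπ : ∀ a, 0 < π₀ a) (hw : 0 < w) {Q Q' : A → ℝ} {c : ℝ}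
    (h : ∀ a, Q a ≤ Q' a + c) : mellowmax π₀ w Q ≤ mellowmax π₀ w Q' + c := by
  rw [← mellowmax_add_const hπ hw.ne']
  exact mellowmax_mono hπ hw h

end

theorem mellowmax_nonexpansive_general
    {A : Type*} [Fintype A] [Nonempty A]
    (π₀ : A → ℝ) (hπpos : ∀ a, 0 < π₀ a)
    (w : ℝ) (hw : 0 < w) (Q₁ Q₂ : A → ℝ) :
    |w * Real.log (∑ a, π₀ a * Real.exp (Q₁ a / w)) -
      w * Real.log (∑ a, π₀ a * Real.exp (Q₂ a / w))| ≤
    Finset.univ.sup' Finset.univ_nonempty (fun a => |Q₁ a - Q₂ a|) := by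
  set M := Finset.univ.sup' Finset.univ_nonempty (fun a => |Q₁ a - Q₂ a|)
  have hM : ∀ a, |Q₁ a - Q₂ a| ≤ M := fun a => le_sup' (fun a => |Q₁ a - Q₂ a|) (mem_univ a)
  have h₁₂ : ∀ a, Q₁ a ≤ Q₂ a + M := fun a => by linarith [(abs_le.1 (hM a)).2]
  have h₂₁ : ∀ a, Q₂ a ≤ Q₁ a + M := fun a => by linarith [(abs_le.1 (hM a)).1]
  rw [abs_sub_le_iff, sub_le_iff_le_add', sub_le_iff_le_add']
  exact ⟨mellowmax_le_add_of_le_add hπpos hw h₁₂, mellowmax_le_add_of_le_add hπpos hw h₂₁⟩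

/-- The mellowmax operator is non-expansive in the sup norm. -/
theorem mellowmax_nonexpansive
    {A : Type*} [Fintype A] [Nonempty A]
    (π₀ : A → ℝ) (hπpos : ∀ a, 0 < π₀ a) (hπsum : ∑ a, π₀ a = 1)
    (w : ℝ) (hw : 0 < w) (Q₁ Q₂ : A → ℝ) :
    |w * Real.log (∑ a, π₀ a * Real.exp (Q₁ a / w)) -
      w * Real.log (∑ a, π₀ a * Real.exp (Q₂ a / w))| ≤
    Finset.univ.sup' Finset.univ_nonempty (fun a => |Q₁ a - Q₂ a|) :=
  mellowmax_nonexpansive_general π₀ hπpos w hw Q₁ Q₂
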